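/- Let Ω ⊂ ℝ² be a bounded measurable set, k > 0, and G : Ω × Ω → M₂(ℂ) a measurable kernel with μ := k · sup_{x∈Ω} ∫_Ω ‖G(x,x')‖₁ dx' < ∞, where ‖·‖₁ is the entrywise ℓ¹ matrix norm. Let V ∈ L^∞(Ω), ψ₀ ∈ L^∞(Ω; ℂ²), and define Φ_a on L^∞(Ω; ℂ²) by (Φ_a ψ_s)(x) = −k ∫_Ω G(x,x') V(x') (ψ₀(x') + ψ_s(x')) dx'. Then for all ψ_s, φ_s ∈ L^∞(Ω; ℂ²), ‖Φ_a ψ_s − Φ_a φ_s‖_{L^∞} ≤ μ ‖V‖_{L^∞(Ω)} ‖ψ_s − φ_s‖_{L^∞}; in particular Φ_a is a contraction whenever μ‖V‖_{L^∞(Ω)} < 1. -/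

import Mathlib

/-! The difference of the two integrals is, by linearity, the integral of
`G(x,·) (V (ψs − φs))`. Pointwise `‖G v‖ ≤ ‖G‖₁ ‖v‖` with the sup norm on `ℂ²`, so its norm
is at most `(∫_Ω ‖G(x,·)‖₁) · c · d`, and the factor `k` turns this into `μ c d`. -/

open MeasureTheory Set

/-- The entrywise ℓ¹ norm of a 2×2 complex matrix. -/
noncomputable def matL1Norm (A : Matrix (Fin 2) (Fin 2) ℂ) : ℝ :=
  ∑ i : Fin 2, ∑ j : Fin 2, ‖A i j‖

open Matrix

theorem Matrix.norm_mulVec_le_sum_norm_mul {m n R : Type*} [Fintype m] [Fintype n]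
    [SeminormedRing R] (A : Matrix m n R) (v : n → R) :
    ‖A *ᵥ v‖ ≤ (∑ i, ∑ j, ‖A i j‖) * ‖v‖ := by
  have hsum_nonneg : 0 ≤ ∑ i, ∑ j, ‖A i j‖ := by positivity
  refine (pi_norm_le_iff_of_nonneg (by positivity)).2 fun i => ?_
  calc ‖(A *ᵥ v) i‖ ≤ ∑ j, ‖A i j‖ * ‖v j‖ := (norm_sum_le _ _).trans
        (Finset.sum_le_sum fun j _ => norm_mul_le _ _)
    _ ≤ (∑ j, ‖A i j‖) * ‖v‖ := by
        rw [Finset.sum_mul]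
        gcongr with j
        exact norm_le_pi_norm v j
    _ ≤ (∑ i, ∑ j, ‖A i j‖) * ‖v‖ := by
        gcongr
        exact Finset.single_le_sum (f := fun i => ∑ j, ‖A i j‖) (fun i _ => by positivity)
          (Finset.mem_univ i)

theorem Matrix.measurable_mulVec {α m n R : Type*} [MeasurableSpace α] [Fintype n]
    [NonUnitalNonAssocSemiring R] [MeasurableSpace R] [MeasurableMul₂ R] [MeasurableAdd₂ R]
    {A : α → Matrix m n R} {v : α → n → R} (hA : ∀ i j, Measurable fun a => A a i j)
    (hv : Measurable v) : Measurable fun a => A a *ᵥ v a :=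
  measurable_pi_iff.2 fun i => Finset.measurable_sum _ fun j _ =>
    (hA i j).mul ((measurable_pi_apply j).comp hv)

lemma matL1Norm_nonneg (A : Matrix (Fin 2) (Fin 2) ℂ) : 0 ≤ matL1Norm A := by
  unfold matL1Norm
  positivity

lemma norm_mulVec_le_matL1Norm_mul {A : Matrix (Fin 2) (Fin 2) ℂ} {v : Fin 2 → ℂ} {C : ℝ}
    (hv : ‖v‖ ≤ C) : ‖A *ᵥ v‖ ≤ matL1Norm A * C :=
  (A.norm_mulVec_le_sum_norm_mul v).trans (mul_le_mul_of_nonneg_left hv (matL1Norm_nonneg A))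

section KernelIntegral

variable {α : Type*} [MeasurableSpace α] {ν : Measure α} {s : Set α}
  {K : α → Matrix (Fin 2) (Fin 2) ℂ} {f : α → Fin 2 → ℂ} {C : ℝ}

lemma integrableOn_mulVec (hs : MeasurableSet s)
    (hK : IntegrableOn (fun y => matL1Norm (K y)) s ν)
    (hKf : AEStronglyMeasurable (fun y => K y *ᵥ f y) (ν.restrict s))
    (hf : ∀ y ∈ s, ‖f y‖ ≤ C) : IntegrableOn (fun y => K y *ᵥ f y) s ν :=
  (hK.mul_const C).mono' hKf
    (ae_restrict_of_forall_mem hs fun y hy => norm_mulVec_le_matL1Norm_mul (hf y hy))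

lemma norm_setIntegral_mulVec_le (hs : MeasurableSet s)
    (hK : IntegrableOn (fun y => matL1Norm (K y)) s ν) (hf : ∀ y ∈ s, ‖f y‖ ≤ C) :
    ‖∫ y in s, K y *ᵥ f y ∂ν‖ ≤ (∫ y in s, matL1Norm (K y) ∂ν) * C := by
  rw [← integral_mul_const]
  exact norm_integral_le_of_norm_le (hK.mul_const C)
    (ae_restrict_of_forall_mem hs fun y hy => norm_mulVec_le_matL1Norm_mul (hf y hy))

end KernelIntegral

theorem stmt_4_general
    (Ω : Set (ℝ × ℝ)) (hΩmeas : MeasurableSet Ω)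
    (k : ℝ) (hk : 0 < k)
    (G : ℝ × ℝ → ℝ × ℝ → Matrix (Fin 2) (Fin 2) ℂ)
    (hGmeas : ∀ i j : Fin 2, Measurable (fun p : (ℝ × ℝ) × (ℝ × ℝ) => G p.1 p.2 i j))
    (μ : ℝ) (hGint : ∀ x ∈ Ω, IntegrableOn (fun x' => matL1Norm (G x x')) Ω)
    (hμ : ∀ x ∈ Ω, k * ∫ x' in Ω, matL1Norm (G x x') ≤ μ)
    (V : ℝ × ℝ → ℂ) (hVmeas : Measurable V)
    (c : ℝ) (hVbound : ∀ x ∈ Ω, ‖V x‖ ≤ c)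
    (ψ₀ : ℝ × ℝ → Fin 2 → ℂ) (hψ₀meas : Measurable ψ₀)
    (C₀ : ℝ) (hψ₀bound : ∀ x ∈ Ω, ‖ψ₀ x‖ ≤ C₀)
    (ψs φs : ℝ × ℝ → Fin 2 → ℂ)
    (hψsmeas : Measurable ψs) (hφsmeas : Measurable φs)
    (Cs : ℝ) (hψsbound : ∀ x ∈ Ω, ‖ψs x‖ ≤ Cs) (hφsbound : ∀ x ∈ Ω, ‖φs x‖ ≤ Cs)
    (d : ℝ) (hdiff : ∀ x' ∈ Ω, ‖ψs x' - φs x'‖ ≤ d) :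
    ∀ x ∈ Ω,
      ‖((-k) • ∫ x' in Ω, (G x x').mulVec (V x' • (ψ₀ x' + ψs x'))) -
        ((-k) • ∫ x' in Ω, (G x x').mulVec (V x' • (ψ₀ x' + φs x')))‖ ≤
        μ * c * d := by
  intro x hx
  have hc : 0 ≤ c := (norm_nonneg _).trans (hVbound x hx)
  have hd : 0 ≤ d := (norm_nonneg _).trans (hdiff x hx)
  have hGx (i j : Fin 2) : Measurable fun y => G x y i j :=
    (hGmeas i j).comp measurable_prodMk_left
  have hV_smul {w : ℝ × ℝ → Fin 2 → ℂ} {C : ℝ} (hw : ∀ y ∈ Ω, ‖w y‖ ≤ C) :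
      ∀ y ∈ Ω, ‖V y • w y‖ ≤ c * C := fun y hy =>
    (norm_smul_le _ _).trans (mul_le_mul (hVbound y hy) (hw y hy) (norm_nonneg _) hc)
  have hint {φ : ℝ × ℝ → Fin 2 → ℂ} (hφ : Measurable φ) (hφb : ∀ y ∈ Ω, ‖φ y‖ ≤ Cs) :
      IntegrableOn (fun y => G x y *ᵥ (V y • (ψ₀ y + φ y))) Ω :=
    integrableOn_mulVec hΩmeas (hGint x hx)
      (measurable_mulVec hGx (hVmeas.smul (hψ₀meas.add hφ))).aestronglyMeasurable
      (hV_smul fun y hy => (norm_add_le _ _).trans (add_le_add (hψ₀bound y hy) (hφb y hy)))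
  have hlinear : (∫ y in Ω, G x y *ᵥ (V y • (ψ₀ y + ψs y))) -
      ∫ y in Ω, G x y *ᵥ (V y • (ψ₀ y + φs y)) = ∫ y in Ω, G x y *ᵥ (V y • (ψs y - φs y)) := by
    rw [← integral_sub (hint hψsmeas hψsbound) (hint hφsmeas hφsbound)]
    simp only [← mulVec_sub, ← smul_sub, add_sub_add_left_eq_sub]
  rw [← smul_sub, hlinear, norm_smul, norm_neg, Real.norm_of_nonneg hk.le]
  calc k * ‖∫ y in Ω, G x y *ᵥ (V y • (ψs y - φs y))‖
      ≤ k * ((∫ y in Ω, matL1Norm (G x y)) * (c * d)) := by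
        gcongr
        exact norm_setIntegral_mulVec_le hΩmeas (hGint x hx) (hV_smul hdiff)
    _ = (k * ∫ y in Ω, matL1Norm (G x y)) * (c * d) := by ring
    _ ≤ μ * (c * d) := by gcongr; exact hμ x hx
    _ = μ * c * d := by ring

/-- **Contraction estimate for the anti-chiral Lippmann–Schwinger map** `Φ_a`, where
`(Φ_a ψ_s)(x) = −k ∫_Ω G(x,x') V(x') (ψ₀(x') + ψ_s(x')) dx'`:
`‖Φ_a ψ_s − Φ_a φ_s‖_{L^∞} ≤ μ ‖V‖_{L^∞(Ω)} ‖ψ_s − φ_s‖_{L^∞}`.  In particular `Φ_a`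
is a contraction whenever `μ‖V‖_{L^∞(Ω)} < 1`. -/
theorem stmt_4
    (Ω : Set (ℝ × ℝ)) (hΩmeas : MeasurableSet Ω) (hΩbdd : Bornology.IsBounded Ω)
    (k : ℝ) (hk : 0 < k)
    (G : ℝ × ℝ → ℝ × ℝ → Matrix (Fin 2) (Fin 2) ℂ)
    (hGmeas : ∀ i j : Fin 2, Measurable (fun p : (ℝ × ℝ) × (ℝ × ℝ) => G p.1 p.2 i j))
    (μ : ℝ) (hGint : ∀ x ∈ Ω, IntegrableOn (fun x' => matL1Norm (G x x')) Ω)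
    (hμ : ∀ x ∈ Ω, k * ∫ x' in Ω, matL1Norm (G x x') ≤ μ)
    (V : ℝ × ℝ → ℂ) (hVmeas : Measurable V)
    (c : ℝ) (hc : 0 ≤ c) (hVbound : ∀ x ∈ Ω, ‖V x‖ ≤ c)
    (ψ₀ : ℝ × ℝ → Fin 2 → ℂ) (hψ₀meas : Measurable ψ₀)
    (C₀ : ℝ) (hψ₀bound : ∀ x ∈ Ω, ‖ψ₀ x‖ ≤ C₀)
    (ψs φs : ℝ × ℝ → Fin 2 → ℂ)
    (hψsmeas : Measurable ψs) (hφsmeas : Measurable φs)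
    (Cs : ℝ) (hψsbound : ∀ x ∈ Ω, ‖ψs x‖ ≤ Cs) (hφsbound : ∀ x ∈ Ω, ‖φs x‖ ≤ Cs)
    (d : ℝ) (hd : 0 ≤ d) (hdiff : ∀ x' ∈ Ω, ‖ψs x' - φs x'‖ ≤ d) :
    ∀ x ∈ Ω,
      ‖((-k) • ∫ x' in Ω, (G x x').mulVec (V x' • (ψ₀ x' + ψs x'))) -
        ((-k) • ∫ x' in Ω, (G x x').mulVec (V x' • (ψ₀ x' + φs x')))‖ ≤
        μ * c * d :=
  stmt_4_general Ω hΩmeas k hk G hGmeas μ hGint hμ V hVmeas c hVbound ψ₀ hψ₀meas C₀ hψ₀bound ψs φs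
    hψsmeas hφsmeas Cs hψsbound hφsbound d hdiff
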